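/- arXiv:2107.05419 — 2 statements merged into one kernel-verified Lean document; each statement's English description precedes it below -/
import Mathlib

section
/- Let T be an observation tree for a Mealy machine M, with basis S and frontier F, where the relation ≈ on Q^M has n equivalence classes and |I| = k. Then the norm satisfies N(T) ≤ n(n+1)/2 + kn + (n−1)(kn+1); in particular N(T) ∈ O(k n²). -/
open scoped Classical

/-- A Mealy machine over input alphabet `I` and output alphabet `O`, with state
type `Q`, initial state `q0`, and a partial combined output/transition map
`trans : Q × I ⇀ O × Q` (so the output and transition functions are defined on
exactly the same pairs). -/
structure Mealy (Q I O : Type) where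
  q0 : Q
  trans : Q → I → Option (O × Q)

namespace Mealy

variable {Q Q' I O : Type}

/-- Extension of the combined output/transition map to input words. -/
def stepStar (M : Mealy Q I O) : Q → List I → Option (List O × Q)
  | q, [] => some ([], q)
  | q, i :: σ => (M.trans q i).bind fun p =>
      (stepStar M p.2 σ).map fun r => (p.1 :: r.1, r.2)

/-- `λ(q, σ)`: the output word produced from `q` on input word `σ` (if defined);
this is also the semantics `⟦q⟧ : I* ⇀ O*` of the state `q`. -/
def outStar (M : Mealy Q I O) (q : Q) (σ : List I) : Option (List O) :=
  (M.stepStar q σ).map Prod.fst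

/-- `δ(q, σ)`: the state reached from `q` on input word `σ` (if defined). -/
def delStar (M : Mealy Q I O) (q : Q) (σ : List I) : Option Q :=
  (M.stepStar q σ).map Prod.snd

/-- `σ ⊢ q # p`: the word `σ` witnesses apartness of `q` and `p`. -/
def ApartW (M : Mealy Q I O) (σ : List I) (q p : Q) : Prop :=
  (M.outStar q σ).isSome ∧ (M.outStar p σ).isSome ∧ M.outStar q σ ≠ M.outStar p σ

/-- `q # p`: states `q` and `p` are apart. -/
def Apart (M : Mealy Q I O) (q p : Q) : Prop := ∃ σ, M.ApartW σ q p

/-- `q ≈ r`: states `q` (of `M`) and `r` (of `N`) are equivalent, i.e. have equal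
semantics `⟦q⟧ = ⟦r⟧` as partial maps `I* ⇀ O*`. -/
def StateEquiv (M : Mealy Q I O) (N : Mealy Q' I O) (q : Q) (r : Q') : Prop :=
  ∀ σ, M.outStar q σ = N.outStar r σ

/-- A functional simulation `f : M → N`. -/
def FunSim (M : Mealy Q I O) (N : Mealy Q' I O) (f : Q → Q') : Prop :=
  f M.q0 = N.q0 ∧
    ∀ q i o q'', M.trans q i = some (o, q'') → N.trans (f q) i = some (o, f q'')

/-- A Mealy machine is complete if its transition map is total. -/
def Complete (M : Mealy Q I O) : Prop := ∀ q i, (M.trans q i).isSome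

/-- A Mealy machine is a tree if every state is reached from the root by a
unique input word (its access sequence). -/
def IsTree (M : Mealy Q I O) : Prop :=
  ∀ q : Q, ∃! σ : List I, M.delStar M.q0 σ = some q

/-- `S` is a basis of the observation tree `T`: a subtree containing the root
whose states are pairwise apart. -/
structure IsBasis (T : Mealy Q I O) (S : Set Q) : Prop where
  root_mem : T.q0 ∈ S
  subtree_closed : ∀ q i o q', T.trans q i = some (o, q') → q' ∈ S → q ∈ S
  pairwise_apart : ∀ p ∈ S, ∀ q ∈ S, p ≠ q → T.Apart p q

/-- The frontier `F`: immediate non-basis successors of basis states. -/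
def frontier (T : Mealy Q I O) (S : Set Q) : Set Q :=
  {q' | q' ∉ S ∧ ∃ q ∈ S, ∃ i o, T.trans q i = some (o, q')}

/-- The basis `S` is complete: each basis state has a transition for each input. -/
def BasisComplete (T : Mealy Q I O) (S : Set Q) : Prop :=
  ∀ q ∈ S, ∀ i : I, (T.trans q i).isSome

/-- A Mealy machine `H` with state set `S` contains the basis `S` of `T`:
`δ^H(q0^H, access(q)) = q` for every `q ∈ S`. -/
def ContainsBasis (T : Mealy Q I O) (S : Set Q) (H : Mealy ↥S I O) : Prop :=
  ∀ (q : ↥S) (σ : List I), T.delStar T.q0 σ = some (q : Q) → H.delStar H.q0 σ = some q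

/-- `H` is a hypothesis for the observation tree `T` with basis `S`. -/
def IsHypothesis (T : Mealy Q I O) (S : Set Q) (H : Mealy ↥S I O) : Prop :=
  H.Complete ∧ ContainsBasis T S H ∧
    ∀ (q : ↥S) (i : I) (o' : O) (p' : ↥S), H.trans q i = some (o', p') →
      ∀ (o : O) (p : Q), T.trans (q : Q) i = some (o, p) → o = o' ∧ ¬ T.Apart p (p' : Q)

/-- The equivalence `≈` on the states of a single machine, as a setoid. -/
def equivSetoid (M : Mealy Q I O) : Setoid Q :=
  ⟨fun q r => M.StateEquiv M q r,
   ⟨fun _ _ => rfl, fun h σ => (h σ).symm, fun h1 h2 σ => (h1 σ).trans (h2 σ)⟩⟩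

/-- `R` is a bisimulation between `M` and `N`. -/
def IsBisimulation (M : Mealy Q I O) (N : Mealy Q' I O) (R : Q → Q' → Prop) : Prop :=
  R M.q0 N.q0 ∧
    ∀ q r, R q r → ∀ i o q', M.trans q i = some (o, q') →
      ∃ r', N.trans r i = some (o, r') ∧ R q' r'

end Mealy

/-!
Sending a tree state `q` to the `≈`-class of `f q` is injective on the basis: functional
simulations preserve apartness, and apart states are inequivalent. Hence `|S| ≤ n`, at most
`k n` transitions leave `S`, every frontier state is the target of one of them, and a frontier
state `q'` can only be apart from basis states lying outside the class of `f q'`, of which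
there are at most `n - 1`.
-/

theorem Set.ncard_le_mul_ncard_of_fiber_le {α β : Type*} [Finite α] [Finite β]
    {s : Set α} {t : Set β} {f : α → β} (hf : Set.MapsTo f s t) (m : ℕ)
    (hm : ∀ b ∈ t, {a ∈ s | f a = b}.ncard ≤ m) : s.ncard ≤ m * t.ncard := by
  classical
  obtain ⟨s, rfl⟩ := s.toFinite.exists_finset_coe
  obtain ⟨t, rfl⟩ := t.toFinite.exists_finset_coe
  simp only [Set.ncard_coe_finset]
  refine Finset.card_le_mul_card_image_of_maps_to hf m fun b hb => ?_
  simpa [← Set.ncard_coe_finset, Finset.coe_filter] using hm b hb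

theorem Set.ncard_le_card_sub_one_of_injOn {α C : Type*} [Finite C] {s : Set α} {g : α → C}
    (hg : Set.InjOn g s) {c : C} (hc : ∀ a ∈ s, g a ≠ c) : s.ncard ≤ Nat.card C - 1 := by
  calc s.ncard = (g '' s).ncard := hg.ncard_image.symm
    _ ≤ ({c}ᶜ : Set C).ncard := Set.ncard_le_ncard (by rintro _ ⟨a, ha, rfl⟩; exact hc a ha)
    _ = Nat.card C - 1 := by rw [Set.ncard_compl, Set.ncard_singleton]

namespace Mealy

variable {Q Q' I O : Type} {M : Mealy Q I O} {N : Mealy Q' I O} {f : Q → Q'}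

theorem FunSim.stepStar_eq_some (hf : M.FunSim N f) :
    ∀ {σ : List I} {q : Q} {w : List O} {q' : Q},
      M.stepStar q σ = some (w, q') → N.stepStar (f q) σ = some (w, f q')
  | [], q, w, q' => by
      simp only [stepStar, Option.some_inj, Prod.mk.injEq]
      rintro ⟨rfl, rfl⟩
      exact ⟨rfl, rfl⟩
  | i :: σ, q, w, q' => by
      simp only [stepStar, Option.bind_eq_some_iff, Option.map_eq_some_iff, Prod.mk.injEq]
      rintro ⟨⟨o, p⟩, hqp, ⟨w', r⟩, hpr, rfl, rfl⟩
      exact ⟨(o, f p), hf.2 q i o p hqp, (w', f r), hf.stepStar_eq_some hpr, rfl, rfl⟩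

theorem FunSim.outStar_eq_some (hf : M.FunSim N f) {σ : List I} {q : Q} {w : List O}
    (hw : M.outStar q σ = some w) : N.outStar (f q) σ = some w := by
  obtain ⟨⟨w, q'⟩, hq', rfl⟩ := Option.map_eq_some_iff.1 hw
  simp [outStar, hf.stepStar_eq_some hq']

theorem FunSim.apart (hf : M.FunSim N f) {p q : Q} (h : M.Apart p q) : N.Apart (f p) (f q) := by
  obtain ⟨σ, hp, hq, hne⟩ := h
  obtain ⟨u, hu⟩ := Option.isSome_iff_exists.1 hp
  obtain ⟨v, hv⟩ := Option.isSome_iff_exists.1 hq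
  refine ⟨σ, ?_, ?_, ?_⟩
  · simp [hf.outStar_eq_some hu]
  · simp [hf.outStar_eq_some hv]
  · rwa [hf.outStar_eq_some hu, hf.outStar_eq_some hv, ← hu, ← hv]

theorem Apart.not_stateEquiv {p q : Q} (h : M.Apart p q) : ¬ M.StateEquiv M p q :=
  fun he => let ⟨σ, _, _, hne⟩ := h; hne (he σ)

theorem FunSim.mk_ne_of_apart (hf : M.FunSim N f) {p q : Q} (h : M.Apart p q) :
    Quotient.mk N.equivSetoid (f p) ≠ Quotient.mk N.equivSetoid (f q) :=
  fun he => (hf.apart h).not_stateEquiv (Quotient.exact he)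

theorem IsBasis.injOn_mk {S : Set Q} (hS : M.IsBasis S) (hf : M.FunSim N f) :
    Set.InjOn (fun q => Quotient.mk N.equivSetoid (f q)) S := by
  intro p hp q hq he
  by_contra hne
  exact hf.mk_ne_of_apart (hS.pairwise_apart p hp q hq hne) he

theorem IsBasis.ncard_le_card_quotient [Finite Q'] {S : Set Q} (hS : M.IsBasis S)
    (hf : M.FunSim N f) : S.ncard ≤ Nat.card (Quotient N.equivSetoid) :=
  calc S.ncard = ((fun q => Quotient.mk N.equivSetoid (f q)) '' S).ncard :=
        (hS.injOn_mk hf).ncard_image.symm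
    _ ≤ _ := Set.ncard_le_card _

theorem ncard_definedTransitions_le [Finite Q] [Finite I] (T : Mealy Q I O) (S : Set Q) :
    {p : Q × I | p.1 ∈ S ∧ (T.trans p.1 p.2).isSome}.ncard ≤ S.ncard * Nat.card I :=
  calc _ ≤ (S ×ˢ (Set.univ : Set I)).ncard := Set.ncard_le_ncard fun _ hp => ⟨hp.1, trivial⟩
    _ = S.ncard * Nat.card I := by rw [Set.ncard_prod, Set.ncard_univ]

theorem ncard_frontier_le [Finite Q] [Finite I] (T : Mealy Q I O) (S : Set Q) :
    (T.frontier S).ncard ≤ {p : Q × I | p.1 ∈ S ∧ (T.trans p.1 p.2).isSome}.ncard := by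
  have : Option.some '' T.frontier S ⊆
      (fun p : Q × I => (T.trans p.1 p.2).map Prod.snd) ''
        {p : Q × I | p.1 ∈ S ∧ (T.trans p.1 p.2).isSome} := by
    rintro _ ⟨q', ⟨-, q, hq, i, o, ht⟩, rfl⟩
    exact ⟨(q, i), ⟨hq, by simp [ht]⟩, by simp [ht]⟩
  calc (T.frontier S).ncard = (Option.some '' T.frontier S).ncard :=
        (Set.ncard_image_of_injective _ (Option.some_injective _)).symm
    _ ≤ _ := (Set.ncard_le_ncard this).trans Set.ncard_image_le

theorem ncard_apart_frontier_le [Finite Q] [Finite Q'] {S : Set Q} (hS : M.IsBasis S)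
    (hf : M.FunSim N f) :
    {p : Q × Q | p.1 ∈ S ∧ p.2 ∈ M.frontier S ∧ M.Apart p.1 p.2}.ncard ≤
      (Nat.card (Quotient N.equivSetoid) - 1) * (M.frontier S).ncard := by
  refine Set.ncard_le_mul_ncard_of_fiber_le (f := Prod.snd) (fun p hp => hp.2.1) _
    fun q' _ => Set.ncard_le_card_sub_one_of_injOn (g := fun p => Quotient.mk _ (f p.1))
      (c := Quotient.mk _ (f q')) ?_ ?_
  · rintro ⟨p, _⟩ ⟨⟨hp, -⟩, rfl⟩ ⟨r, _⟩ ⟨⟨hr, -⟩, rfl⟩ he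
    exact Prod.ext (hS.injOn_mk hf hp hr he) rfl
  · rintro ⟨p, _⟩ ⟨⟨-, -, hpq⟩, rfl⟩
    exact hf.mk_ne_of_apart hpq

end Mealy

theorem statement_8_general {QT QM I O : Type} [Fintype I] [Fintype QT] [Fintype QM]
    (T : Mealy QT I O) (M : Mealy QM I O)
    (f : QT → QM) (hf : T.FunSim M f)
    (S : Set QT) (hS : T.IsBasis S)
    (n k : ℕ) (hn : n = Nat.card (Quotient M.equivSetoid)) (hk : k = Nat.card I) :
    S.ncard * (S.ncard + 1) / 2
        + {p : QT × I | p.1 ∈ S ∧ (T.trans p.1 p.2).isSome}.ncard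
        + {p : QT × QT | p.1 ∈ S ∧ p.2 ∈ T.frontier S ∧ T.Apart p.1 p.2}.ncard
      ≤ n * (n + 1) / 2 + k * n + (n - 1) * (k * n + 1) := by
  subst hn hk
  have hS_le := hS.ncard_le_card_quotient hf
  have hTrans : _ ≤ Nat.card I * Nat.card (Quotient M.equivSetoid) :=
    (T.ncard_definedTransitions_le S).trans (by rw [mul_comm]; exact Nat.mul_le_mul_left _ hS_le)
  have hApart := (Mealy.ncard_apart_frontier_le hS hf).trans
    (Nat.mul_le_mul_left _ ((T.ncard_frontier_le S).trans (hTrans.trans (Nat.le_succ _))))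
  exact add_le_add (add_le_add
    (Nat.div_le_div_right (Nat.mul_le_mul hS_le (Nat.succ_le_succ hS_le))) hTrans) hApart

/-- For an observation tree `T` for `M` with basis `S` and
frontier `F`, where `≈` on `Q^M` has `n` classes and `|I| = k`, the norm
`N(T) = |S|(|S|+1)/2 + |{(q,i) ∈ S×I : δ^T(q,i)↓}| + |{(q,q') ∈ S×F : q # q'}|`
satisfies `N(T) ≤ n(n+1)/2 + kn + (n−1)(kn+1)`. -/
theorem statement_8 {QT QM I O : Type} [Fintype I] [Fintype QT] [Fintype QM]
    (T : Mealy QT I O) (M : Mealy QM I O) (htree : T.IsTree)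
    (f : QT → QM) (hf : T.FunSim M f)
    (S : Set QT) (hS : T.IsBasis S)
    (n k : ℕ) (hn : n = Nat.card (Quotient M.equivSetoid)) (hk : k = Nat.card I) :
    S.ncard * (S.ncard + 1) / 2
        + {p : QT × I | p.1 ∈ S ∧ (T.trans p.1 p.2).isSome}.ncard
        + {p : QT × QT | p.1 ∈ S ∧ p.2 ∈ T.frontier S ∧ T.Apart p.1 p.2}.ncard
      ≤ n * (n + 1) / 2 + k * n + (n - 1) * (k * n + 1) :=
  statement_8_general T M f hf S hS n k hn hk
end

section
/- Let T be a tree Mealy machine with finite output alphabet O and let U ⊆ Q^T be a finite set of states. If there exist r, r' ∈ U with r # r', then the expected reward satisfies E(U) > 0. -/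
open scoped Classical

namespace Mealy

variable {Q Q' I O : Type}

/-- `inp(U)`: inputs enabled in some state of `U`. -/
noncomputable def inpSet [Fintype I] (M : Mealy Q I O) (U : Set Q) : Finset I :=
  Finset.univ.filter fun i => ∃ q ∈ U, (M.trans q i).isSome

/-- `U →^i`: the states of `U` where input `i` is enabled. -/
def arrowSet (M : Mealy Q I O) (U : Set Q) (i : I) : Set Q :=
  {q ∈ U | (M.trans q i).isSome}

/-- `U →^{i/o}`: the `i/o`-successors of states in `U`. -/
def stepSet (M : Mealy Q I O) (U : Set Q) (i : I) (o : O) : Set Q :=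
  {q' | ∃ q ∈ U, M.trans q i = some (o, q')}

/-- The inner expression of the expected-reward recurrence for input `i`, where
`E'` plays the role of the recursive call. -/
noncomputable def rewardAux [Fintype O] (M : Mealy Q I O) (E' : Set Q → ℚ)
    (U : Set Q) (i : I) : ℚ :=
  ∑ o : O,
    ((M.stepSet U i o).ncard : ℚ) *
        (((M.arrowSet U i).ncard : ℚ) - ((M.stepSet U i o).ncard : ℚ)
          + E' (M.stepSet U i o))
      / ((M.arrowSet U i).ncard : ℚ)

/-- Fueled version of the expected reward `E(U)`; the maximum over the empty
set is `0`. -/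
noncomputable def Efuel [Fintype I] [Fintype O] (M : Mealy Q I O) :
    ℕ → Set Q → ℚ
  | 0, _ => 0
  | n + 1, U => WithBot.unbotD 0 ((M.inpSet U).image (M.rewardAux (M.Efuel n) U)).max

/-- The expected reward `E(U)`.  Since in a tree Mealy machine with finite state
space every chain `U, U→^{i/o}, …` reaches a set with no enabled inputs within
`Fintype.card Q` steps, fuel `Fintype.card Q + 1` realizes the recursive
definition `E(U) = max_{i ∈ inp(U)} Σ_o |U→^{i/o}|·(|U→^i| − |U→^{i/o}| + E(U→^{i/o}))/|U→^i|`. -/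
noncomputable def expectedReward [Fintype Q] [Fintype I] [Fintype O]
    (M : Mealy Q I O) (U : Set Q) : ℚ :=
  M.Efuel (Fintype.card Q + 1) U

/-- The value of the expression inside the maximum defining `E(U)`, for a given
input `i`; an input `i ∈ inp(U)` attains the maximum in the definition of
`E(U)` iff `rewardFor M U i = expectedReward M U`. -/
noncomputable def rewardFor [Fintype Q] [Fintype I] [Fintype O]
    (M : Mealy Q I O) (U : Set Q) (i : I) : ℚ :=
  M.rewardAux (M.Efuel (Fintype.card Q)) U i

end Mealy

/-!
Follow a word `σ` separating `r` and `r'`, with first input `i`. If `r` and `r'` answer `i`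
with different outputs `o ≠ o'`, then `r'` is missing from the predecessors of `U→^{i/o}`, so
`|U→^i| − |U→^{i/o}| > 0` and the `o`-summand for `i` is positive. If they answer alike, their
successors lie in `U→^{i/o}` and are separated by the tail of `σ`, so `E(U→^{i/o}) > 0` by
induction. All summands are nonnegative, so `E(U) > 0`. The fuel `|Q| + 1` in the definition of
`E` suffices because in a tree every word defined from a state is shorter than `|Q|`.
-/

namespace Mealy

variable {Q I O : Type}

theorem stepStar_append (M : Mealy Q I O) (σ τ : List I) (q : Q) :
    M.stepStar q (σ ++ τ) = (M.stepStar q σ).bind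
      (fun p => (M.stepStar p.2 τ).map fun s => (p.1 ++ s.1, s.2)) := by
  induction σ generalizing q with
  | nil => simp [stepStar]
  | cons i σ ih =>
    cases h : M.trans q i with
    | none => simp [stepStar, h]
    | some p =>
      simp only [List.cons_append, stepStar, h, Option.bind_some, ih]
      cases M.stepStar p.2 σ with
      | none => rfl
      | some s => simp [Option.map_map, Function.comp_def]

theorem delStar_append (M : Mealy Q I O) (σ τ : List I) (q : Q) :
    M.delStar q (σ ++ τ) = (M.delStar q σ).bind fun p => M.delStar p τ := by
  simp only [delStar, stepStar_append]
  cases M.stepStar q σ with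
  | none => rfl
  | some p => simp [Option.map_map, Function.comp_def]

theorem isSome_delStar_take {M : Mealy Q I O} {q : Q} {σ : List I}
    (h : (M.delStar q σ).isSome) (k : ℕ) : (M.delStar q (σ.take k)).isSome := by
  rw [← List.take_append_drop k σ, delStar_append] at h
  exact Option.isSome_of_isSome_bind h

theorem outStar_cons (M : Mealy Q I O) (q : Q) (i : I) (σ : List I) :
    M.outStar q (i :: σ) = (M.trans q i).bind fun x => (M.outStar x.2 σ).map (x.1 :: ·) := by
  cases h : M.trans q i <;> simp [outStar, stepStar, h, Option.map_map, Function.comp_def]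

theorem not_apartW_nil (M : Mealy Q I O) (q p : Q) : ¬ M.ApartW [] q p :=
  fun h => h.2.2 rfl

theorem ApartW.of_cons {M : Mealy Q I O} {i : I} {σ : List I} {q p : Q}
    (h : M.ApartW (i :: σ) q p) :
    ∃ o q' o' p', M.trans q i = some (o, q') ∧ M.trans p i = some (o', p') ∧
      (o ≠ o' ∨ o = o' ∧ M.ApartW σ q' p') := by
  obtain ⟨hq, hp, hne⟩ := h
  simp only [outStar_cons] at hq hp hne
  obtain ⟨⟨o, q'⟩, hq'⟩ := Option.isSome_iff_exists.mp (Option.isSome_of_isSome_bind hq)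
  obtain ⟨⟨o', p'⟩, hp'⟩ := Option.isSome_iff_exists.mp (Option.isSome_of_isSome_bind hp)
  refine ⟨o, q', o', p', hq', hp', ?_⟩
  simp only [hq', hp', Option.bind_some, Option.isSome_map] at hq hp hne
  by_cases ho : o = o'
  · subst ho
    exact Or.inr ⟨rfl, hq, hp, fun h => hne (by rw [h])⟩
  · exact Or.inl ho

theorem IsTree.eq_of_delStar_eq {T : Mealy Q I O} (htree : T.IsTree) {r p : Q}
    {τ₁ τ₂ : List I} (h₁ : T.delStar r τ₁ = some p) (h₂ : T.delStar r τ₂ = some p) :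
    τ₁ = τ₂ := by
  obtain ⟨α, hα, -⟩ := htree r
  obtain ⟨β, -, huniq⟩ := htree p
  have access : ∀ {τ}, T.delStar r τ = some p → α ++ τ = β := fun {τ} h =>
    huniq _ (show T.delStar T.q0 (α ++ τ) = some p by
      rw [delStar_append, hα, Option.bind_some, h])
  exact List.append_cancel_left ((access h₁).trans (access h₂).symm)

theorem IsTree.length_lt_card [Fintype Q] {T : Mealy Q I O} (htree : T.IsTree)
    {r : Q} {σ : List I} (h : (T.delStar r σ).isSome) : σ.length < Fintype.card Q := by
  let f : Fin (σ.length + 1) → Q := fun k => (T.delStar r (σ.take k)).get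
    (isSome_delStar_take h k)
  have hf : Function.Injective f := fun j k hjk => by
    have hj : T.delStar r (σ.take j) = some (f j) := (Option.some_get _).symm
    have hk : T.delStar r (σ.take k) = some (f j) := by rw [hjk]; exact (Option.some_get _).symm
    have := congrArg List.length (htree.eq_of_delStar_eq hj hk)
    simp only [List.length_take] at this
    omega
  simpa using Fintype.card_le_of_injective f hf

theorem ncard_stepSet_le [Finite Q] {M : Mealy Q I O} {U B : Set Q} {i : I} {o : O}
    (hB : ∀ q ∈ U, ∀ q', M.trans q i = some (o, q') → q ∈ B) :
    (M.stepSet U i o).ncard ≤ B.ncard := by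
  let succ : Q → Q := fun q => ((M.trans q i).map Prod.snd).getD q
  have hsub : M.stepSet U i o ⊆ succ '' B := by
    rintro q' ⟨q, hq, hq'⟩
    exact ⟨q, hB q hq q' hq', by simp [succ, hq']⟩
  exact (Set.ncard_le_ncard hsub).trans (Set.ncard_image_le (Set.toFinite B))

theorem ncard_stepSet_le_ncard_arrowSet [Finite Q] (M : Mealy Q I O) (U : Set Q) (i : I)
    (o : O) : (M.stepSet U i o).ncard ≤ (M.arrowSet U i).ncard :=
  ncard_stepSet_le fun q hq q' h => ⟨hq, by simp [h]⟩

theorem ncard_stepSet_lt_ncard_arrowSet [Finite Q] {M : Mealy Q I O} {U : Set Q} {i : I}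
    {o o' : O} {r' p' : Q} (hr' : r' ∈ U) (h : M.trans r' i = some (o', p')) (ho : o ≠ o') :
    (M.stepSet U i o).ncard < (M.arrowSet U i).ncard := by
  have hr'A : r' ∈ M.arrowSet U i := ⟨hr', by simp [h]⟩
  refine lt_of_le_of_lt (ncard_stepSet_le (B := M.arrowSet U i \ {r'}) ?_)
    (Set.ncard_sdiff_singleton_lt_of_mem hr'A)
  rintro q hq q' hq'
  refine ⟨⟨hq, by simp [hq']⟩, fun hqr => ?_⟩
  rw [Set.mem_singleton_iff.mp hqr, h] at hq'
  exact ho (Prod.mk.inj (Option.some.inj hq')).1.symm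

theorem rewardAux_summand_nonneg [Finite Q] {M : Mealy Q I O} {E' : Set Q → ℚ}
    (hE' : ∀ V, 0 ≤ E' V) (U : Set Q) (i : I) (o : O) :
    0 ≤ ((M.stepSet U i o).ncard : ℚ) * (((M.arrowSet U i).ncard : ℚ)
      - (M.stepSet U i o).ncard + E' (M.stepSet U i o)) / (M.arrowSet U i).ncard := by
  have hle : ((M.stepSet U i o).ncard : ℚ) ≤ (M.arrowSet U i).ncard := by
    exact_mod_cast ncard_stepSet_le_ncard_arrowSet M U i o
  have := hE' (M.stepSet U i o)
  exact div_nonneg (mul_nonneg (by positivity) (by linarith)) (by positivity)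

theorem rewardAux_nonneg [Finite Q] [Fintype O] {M : Mealy Q I O} {E' : Set Q → ℚ}
    (hE' : ∀ V, 0 ≤ E' V) (U : Set Q) (i : I) : 0 ≤ M.rewardAux E' U i :=
  Finset.sum_nonneg fun o _ => rewardAux_summand_nonneg hE' U i o

theorem rewardAux_pos [Finite Q] [Fintype O] {M : Mealy Q I O} {E' : Set Q → ℚ}
    (hE' : ∀ V, 0 ≤ E' V) {U : Set Q} {i : I} {o : O} (hne : (M.stepSet U i o).Nonempty)
    (hpos : 0 < ((M.arrowSet U i).ncard : ℚ) - (M.stepSet U i o).ncard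
      + E' (M.stepSet U i o)) :
    0 < M.rewardAux E' U i := by
  have hstep : 0 < ((M.stepSet U i o).ncard : ℚ) := by exact_mod_cast hne.ncard_pos
  have harrow : 0 < ((M.arrowSet U i).ncard : ℚ) := hstep.trans_le <| by
    exact_mod_cast ncard_stepSet_le_ncard_arrowSet M U i o
  exact Finset.sum_pos' (fun o _ => rewardAux_summand_nonneg hE' U i o)
    ⟨o, Finset.mem_univ o, div_pos (mul_pos hstep hpos) harrow⟩

theorem Efuel_nonneg [Finite Q] [Fintype I] [Fintype O] (M : Mealy Q I O) (n : ℕ)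
    (U : Set Q) : 0 ≤ M.Efuel n U := by
  induction n generalizing U with
  | zero => rfl
  | succ n ih =>
    rw [Efuel]
    cases hmax : ((M.inpSet U).image (M.rewardAux (M.Efuel n) U)).max with
    | bot => rfl
    | coe x =>
      obtain ⟨j, -, rfl⟩ := Finset.mem_image.mp (Finset.mem_of_max hmax)
      exact rewardAux_nonneg ih U j

theorem rewardAux_le_Efuel_succ [Fintype I] [Fintype O] {M : Mealy Q I O} {U : Set Q} {i : I}
    (hi : i ∈ M.inpSet U) (n : ℕ) : M.rewardAux (M.Efuel n) U i ≤ M.Efuel (n + 1) U := by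
  have hmem := Finset.mem_image_of_mem (M.rewardAux (M.Efuel n) U) hi
  rw [Efuel, ← Finset.coe_max' ⟨_, hmem⟩]
  exact Finset.le_max' _ _ hmem

theorem Efuel_pos [Finite Q] [Fintype I] [Fintype O] {M : Mealy Q I O} {σ : List I}
    {U : Set Q} {r r' : Q} (hσ : M.ApartW σ r r') (hr : r ∈ U) (hr' : r' ∈ U) {n : ℕ}
    (hn : σ.length ≤ n) : 0 < M.Efuel n U := by
  induction σ generalizing n U r r' with
  | nil => exact absurd hσ (not_apartW_nil M r r')
  | cons i σ ih =>
    obtain ⟨n, rfl⟩ : ∃ m, n = m + 1 := Nat.exists_eq_add_one.mpr (by simp at hn; omega)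
    obtain ⟨o, p, o', p', hp, hp', hsplit⟩ := hσ.of_cons
    have hi : i ∈ M.inpSet U := by simpa [inpSet] using ⟨r, hr, by simp [hp]⟩
    have hpV : p ∈ M.stepSet U i o := ⟨r, hr, hp⟩
    refine (rewardAux_pos (Efuel_nonneg M n) ⟨p, hpV⟩ ?_).trans_le
      (rewardAux_le_Efuel_succ hi n)
    have hE := Efuel_nonneg M n (M.stepSet U i o)
    have hle : ((M.stepSet U i o).ncard : ℚ) ≤ (M.arrowSet U i).ncard := by
      exact_mod_cast ncard_stepSet_le_ncard_arrowSet M U i o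
    rcases hsplit with ho | ⟨rfl, hσ'⟩
    · have hlt : ((M.stepSet U i o).ncard : ℚ) < (M.arrowSet U i).ncard := by
        exact_mod_cast ncard_stepSet_lt_ncard_arrowSet hr' hp' ho
      linarith
    · have := ih hσ' hpV ⟨r', hr', hp'⟩ (by simpa using hn)
      linarith

end Mealy

/-- In a tree Mealy machine `T` (with finite `O`), if a set of
states `U` contains two apart states `r # r'`, then the expected reward
satisfies `E(U) > 0`. -/
theorem statement_15 {Q I O : Type} [Fintype Q] [Fintype I] [Fintype O]
    (T : Mealy Q I O) (htree : T.IsTree) (U : Set Q)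
    (r r' : Q) (hr : r ∈ U) (hr' : r' ∈ U) (hap : T.Apart r r') :
    0 < T.expectedReward U := by
  obtain ⟨σ, hσ⟩ := hap
  have hlen : σ.length < Fintype.card Q :=
    htree.length_lt_card (by simpa [Mealy.outStar, Mealy.delStar] using hσ.1)
  exact Mealy.Efuel_pos hσ hr hr' hlen.le.step
end
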